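/- arXiv:1612.08405 — 5 statements merged into one kernel-verified Lean document; each statement's English description precedes it below -/
import Mathlib

section
/- Let H be a complex Hilbert space, let D₁ and D₂ be densely defined self-adjoint operators on H, and let Δ₁, Δ₂ be nonnegative bounded operators on H. Let b and ρ be bounded operators on H such that for every η ∈ dom D₂ one has b*(Δ₂η) ∈ dom D₁ and Δ₁^{1/2}(ρ(Δ₂^{1/2}η)) = D₁(b*(Δ₂η)) − Δ₁(b*(D₂η)). Then for every ξ ∈ dom D₁ one has b(Δ₁ξ) ∈ dom D₂ and D₂(b(Δ₁ξ)) − Δ₂(b(D₁ξ)) = − Δ₂^{1/2}(ρ*(Δ₁^{1/2}ξ)). -/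
open scoped ComplexInnerProductSpace


private lemma sa_inner {H : Type*} [NormedAddCommGroup H] [InnerProductSpace ℂ H]
    [CompleteSpace H] {A : H →L[ℂ] H} (hA : IsSelfAdjoint A) (x y : H) :
    ⟪x, A y⟫ = ⟪A x, y⟫ := by
  conv_lhs => rw [← hA.adjoint_eq]
  rw [ContinuousLinearMap.adjoint_inner_right]

/-- Symmetry of the "bounded modular perturbation" relation: if
`Δ₁^{1/2} ρ Δ₂^{1/2} = D₁ b* Δ₂ − Δ₁ b* D₂` on `dom D₂`, then
`D₂ b Δ₁ − Δ₂ b D₁ = − Δ₂^{1/2} ρ* Δ₁^{1/2}` on `dom D₁`. -/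
theorem stmt_1 {H : Type*} [NormedAddCommGroup H] [InnerProductSpace ℂ H] [CompleteSpace H]
    (D₁ D₂ : H →ₗ.[ℂ] H)
    (hdense₁ : Dense (D₁.domain : Set H)) (hdense₂ : Dense (D₂.domain : Set H))
    (hsa₁ : IsSelfAdjoint D₁) (hsa₂ : IsSelfAdjoint D₂)
    (Δ₁ Δ₂ : H →L[ℂ] H) (hΔ₁ : 0 ≤ Δ₁) (hΔ₂ : 0 ≤ Δ₂)
    (b ρ : H →L[ℂ] H)
    (hmem : ∀ η, η ∈ D₂.domain → (ContinuousLinearMap.adjoint b) (Δ₂ η) ∈ D₁.domain)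
    (heq : ∀ η (hη : η ∈ D₂.domain),
      CFC.sqrt Δ₁ (ρ (CFC.sqrt Δ₂ η)) =
        D₁ ⟨(ContinuousLinearMap.adjoint b) (Δ₂ η), hmem η hη⟩
          - Δ₁ ((ContinuousLinearMap.adjoint b) (D₂ ⟨η, hη⟩))) :
    ∀ ξ (hξ : ξ ∈ D₁.domain), ∃ h : b (Δ₁ ξ) ∈ D₂.domain,
      D₂ ⟨b (Δ₁ ξ), h⟩ - Δ₂ (b (D₁ ⟨ξ, hξ⟩)) =
        - CFC.sqrt Δ₂ ((ContinuousLinearMap.adjoint ρ) (CFC.sqrt Δ₁ ξ)) := by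
  intro ξ hξ
  have h1 : LinearPMap.adjoint D₁ = D₁ := LinearPMap.isSelfAdjoint_def.mp hsa₁
  have h2 : LinearPMap.adjoint D₂ = D₂ := LinearPMap.isSelfAdjoint_def.mp hsa₂
  have hΔ₁sa : IsSelfAdjoint Δ₁ := hΔ₁.isSelfAdjoint
  have hΔ₂sa : IsSelfAdjoint Δ₂ := hΔ₂.isSelfAdjoint
  have hs₁ : IsSelfAdjoint (CFC.sqrt Δ₁) := (CFC.sqrt_nonneg (a := Δ₁)).isSelfAdjoint
  have hs₂ : IsSelfAdjoint (CFC.sqrt Δ₂) := (CFC.sqrt_nonneg (a := Δ₂)).isSelfAdjoint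
  -- formal adjoint property for D₁
  have hfa₁ : D₁.IsFormalAdjoint D₁ := by
    have := LinearPMap.adjoint_isFormalAdjoint hdense₁
    rwa [h1] at this
  set x₀ : H := Δ₂ (b (D₁ ⟨ξ, hξ⟩)) - CFC.sqrt Δ₂ ((ContinuousLinearMap.adjoint ρ)
    (CFC.sqrt Δ₁ ξ)) with hx₀def
  have key : ∀ η : D₂.domain, ⟪x₀, (η : H)⟫ = ⟪b (Δ₁ ξ), D₂ η⟫ := by
    rintro ⟨η, hη⟩
    have e1 : ⟪b (Δ₁ ξ), D₂ ⟨η, hη⟩⟫ = ⟪ξ, Δ₁ ((ContinuousLinearMap.adjoint b)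
        (D₂ ⟨η, hη⟩))⟫ := by
      rw [← ContinuousLinearMap.adjoint_inner_right b, sa_inner hΔ₁sa]
    have e2 : Δ₁ ((ContinuousLinearMap.adjoint b) (D₂ ⟨η, hη⟩)) =
        D₁ ⟨(ContinuousLinearMap.adjoint b) (Δ₂ η), hmem η hη⟩
          - CFC.sqrt Δ₁ (ρ (CFC.sqrt Δ₂ η)) := by
      rw [heq η hη]
      abel
    rw [e1, e2, inner_sub_right]
    have e3 : ⟪ξ, (D₁ ⟨(ContinuousLinearMap.adjoint b) (Δ₂ η), hmem η hη⟩ : H)⟫ =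
        ⟪Δ₂ (b (D₁ ⟨ξ, hξ⟩)), η⟫ := by
      rw [(hfa₁ ⟨ξ, hξ⟩ ⟨(ContinuousLinearMap.adjoint b) (Δ₂ η), hmem η hη⟩).symm,
        ContinuousLinearMap.adjoint_inner_right b, sa_inner hΔ₂sa]
    have e4 : ⟪ξ, CFC.sqrt Δ₁ (ρ (CFC.sqrt Δ₂ η))⟫ =
        ⟪CFC.sqrt Δ₂ ((ContinuousLinearMap.adjoint ρ) (CFC.sqrt Δ₁ ξ)), η⟫ := by
      rw [sa_inner hs₁, ← ContinuousLinearMap.adjoint_inner_left ρ, sa_inner hs₂]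
    rw [e3, e4, hx₀def, inner_sub_left]
  have hmem' : b (Δ₁ ξ) ∈ (LinearPMap.adjoint D₂).domain :=
    LinearPMap.mem_adjoint_domain_of_exists _ ⟨x₀, fun x => key x⟩
  have happ : (LinearPMap.adjoint D₂) ⟨b (Δ₁ ξ), hmem'⟩ = x₀ :=
    LinearPMap.adjoint_apply_eq hdense₂ _ (fun x => key x)
  rw [← h2]
  refine ⟨hmem', ?_⟩
  rw [happ, hx₀def]
  abel
end

section
/- Let H be a complex Hilbert space and let D be a (not necessarily bounded) linear operator defined on a subspace dom D ⊆ H. Let G and a be bounded operators on H mapping dom D into dom D, and let dG and da be bounded operators on H such that dG(ξ) = D(Gξ) − G(Dξ) and da(ξ) = D(aξ) − a(Dξ) for all ξ ∈ dom D. Define the bounded operator ρ := dG∘a∘G + G∘da∘G + G∘a∘dG. Then for every ξ ∈ dom D one has a(G(Gξ)) ∈ dom D, G(a(G(Gξ))) ∈ dom D, and G(ρ(Gξ)) = G(D(G(a(G(Gξ))))) − G(G(a(G(D(Gξ))))); that is, (GρG)(ξ) = (GDG)(aG²ξ) − G²a(GDG)(ξ), where GDG denotes the operator ξ ↦ G(D(Gξ))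 with domain dom D. -/
/-- The twisted-commutator identity `G ρ G = (GDG) a G² − G² a (GDG)` on `dom D`,
where `ρ = dG∘a∘G + G∘da∘G + G∘a∘dG` and `dG`, `da` are bounded extensions of the commutators
`[D,G]`, `[D,a]`. -/
theorem stmt_2 {H : Type*} [NormedAddCommGroup H] [InnerProductSpace ℂ H] [CompleteSpace H]
    (D : H →ₗ.[ℂ] H) (G a dG da : H →L[ℂ] H)
    (hG : ∀ ξ, ξ ∈ D.domain → G ξ ∈ D.domain)
    (ha : ∀ ξ, ξ ∈ D.domain → a ξ ∈ D.domain)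
    (hdG : ∀ ξ (hξ : ξ ∈ D.domain), dG ξ = D ⟨G ξ, hG ξ hξ⟩ - G (D ⟨ξ, hξ⟩))
    (hda : ∀ ξ (hξ : ξ ∈ D.domain), da ξ = D ⟨a ξ, ha ξ hξ⟩ - a (D ⟨ξ, hξ⟩)) :
    ∀ ξ (hξ : ξ ∈ D.domain),
      ∃ (h1 : a (G (G ξ)) ∈ D.domain) (h2 : G (a (G (G ξ))) ∈ D.domain),
        G ((dG ∘L a ∘L G + G ∘L da ∘L G + G ∘L a ∘L dG) (G ξ)) =
          G (D ⟨G (a (G (G ξ))), h2⟩) - G (G (a (G (D ⟨G ξ, hG ξ hξ⟩)))) := by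
  intro ξ hξ
  have hG2 : G (G ξ) ∈ D.domain := hG _ (hG _ hξ)
  have h1 : a (G (G ξ)) ∈ D.domain := ha _ hG2
  have h2 : G (a (G (G ξ))) ∈ D.domain := hG _ h1
  refine ⟨h1, h2, ?_⟩
  simp only [ContinuousLinearMap.add_apply, ContinuousLinearMap.comp_apply, map_add,
    hdG (a (G (G ξ))) h1, hda (G (G ξ)) hG2, hdG (G ξ) (hG _ hξ), map_sub]
  abel
end

section
/- Let H be a complex Hilbert space, let D be a linear operator defined on a subspace dom D ⊆ H, and let G be a bounded invertible operator on H (with bounded inverse G⁻¹) such that G maps dom D into dom D. Suppose A is a bounded operator on H such that A(x) ∈ dom D and i·A(x) + D(A(x)) = x for every x ∈ H, and A(i·η + D(η)) = η for every η ∈ dom D. Suppose B is a bounded operator on H such that G(B(x)) ∈ dom D and i·B(x) + G(D(G(B(x)))) = x for every x ∈ H. Then, as bounded operators on H, B − G⁻¹∘A∘G⁻¹ = i · (G⁻¹∘A∘(G − G⁻¹)∘B). -/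
/-- The resolvent identity
`(i + GDG)⁻¹ − G⁻¹ (i + D)⁻¹ G⁻¹ = i · G⁻¹ (i + D)⁻¹ (G − G⁻¹) (i + GDG)⁻¹`:
if `A` is a two-sided inverse of `i + D` and `B` a right resolvent of `i + GDG`, then
`B − G⁻¹∘A∘G⁻¹ = i • (G⁻¹∘A∘(G − G⁻¹)∘B)`. -/
theorem stmt_3 {H : Type*} [NormedAddCommGroup H] [InnerProductSpace ℂ H] [CompleteSpace H]
    (D : H →ₗ.[ℂ] H) (G Ginv A B : H →L[ℂ] H)
    (hGinv₁ : ∀ x, G (Ginv x) = x) (hGinv₂ : ∀ x, Ginv (G x) = x)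
    (hGdom : ∀ ξ, ξ ∈ D.domain → G ξ ∈ D.domain)
    (hA₁ : ∀ x, A x ∈ D.domain)
    (hA₂ : ∀ x, Complex.I • A x + D ⟨A x, hA₁ x⟩ = x)
    (hA₃ : ∀ η (hη : η ∈ D.domain), A (Complex.I • η + D ⟨η, hη⟩) = η)
    (hB₁ : ∀ x, G (B x) ∈ D.domain)
    (hB₂ : ∀ x, Complex.I • B x + G (D ⟨G (B x), hB₁ x⟩) = x) :
    B - Ginv ∘L A ∘L Ginv = Complex.I • (Ginv ∘L A ∘L (G - Ginv) ∘L B) := by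
  ext x
  have h1 : D ⟨G (B x), hB₁ x⟩ = Ginv x - Complex.I • Ginv (B x) := by
    have := hB₂ x
    have h : G (D ⟨G (B x), hB₁ x⟩) = x - Complex.I • B x := eq_sub_of_add_eq' this
    calc D ⟨G (B x), hB₁ x⟩ = Ginv (G (D ⟨G (B x), hB₁ x⟩)) := (hGinv₂ _).symm
      _ = Ginv (x - Complex.I • B x) := by rw [h]
      _ = Ginv x - Complex.I • Ginv (B x) := by rw [map_sub, map_smul]
  have h2 := hA₃ (G (B x)) (hB₁ x)
  rw [h1] at h2
  have h3 : Complex.I • G (B x) + (Ginv x - Complex.I • Ginv (B x)) =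
      Ginv x + Complex.I • (G (B x) - Ginv (B x)) := by
    rw [smul_sub]; abel
  rw [h3, map_add, map_smul] at h2
  -- h2 : A (Ginv x) + Complex.I • A (G (B x) - Ginv (B x)) = G (B x)
  have h4 := congrArg Ginv h2
  rw [map_add, map_smul, hGinv₂] at h4
  show B x - Ginv (A (Ginv x)) = Complex.I • Ginv (A (G (B x) - Ginv (B x)))
  exact sub_eq_of_eq_add' h4.symm
end

section
/- Let H be a complex Hilbert space, let D be a linear operator defined on a subspace dom D ⊆ H, and let G be a bounded invertible operator on H (with bounded inverse G⁻¹) such that G maps dom D into dom D. Let dG be a bounded operator on H with dG(ξ) = D(Gξ) − G(Dξ) for all ξ ∈ dom D. Suppose A is a bounded operator on H such that A(x) ∈ dom D and i·A(x) + D(A(x)) = x for every x ∈ H, and A(i·η + D(η)) = η for every η ∈ dom D. Suppose B is a bounded operator on H such that for every x ∈ H one has B(x) ∈ dom D, G(B(x)) ∈ dom D and i·B(x) + G(D(G(B(x)))) = x, and such that B(i·η + G(D(Gη))) = η for every η ∈ H with G(η) ∈ dom D. Let a be a bounded operator on H such that a∘A is a compact operator. Then a∘G∘B is a compact operator, and a∘B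 is a compact operator. -/
/-- If `A = (i + D)⁻¹`, `B = (i + GDG)⁻¹` and `a∘A` is compact, then `a∘G∘B`
and `a∘B` are compact. -/
theorem stmt_4 {H : Type*} [NormedAddCommGroup H] [InnerProductSpace ℂ H] [CompleteSpace H]
    (D : H →ₗ.[ℂ] H) (G Ginv A B a dG : H →L[ℂ] H)
    (hGinv₁ : ∀ x, G (Ginv x) = x) (hGinv₂ : ∀ x, Ginv (G x) = x)
    (hGdom : ∀ ξ, ξ ∈ D.domain → G ξ ∈ D.domain)
    (hdG : ∀ ξ (hξ : ξ ∈ D.domain), dG ξ = D ⟨G ξ, hGdom ξ hξ⟩ - G (D ⟨ξ, hξ⟩))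
    (hA₁ : ∀ x, A x ∈ D.domain)
    (hA₂ : ∀ x, Complex.I • A x + D ⟨A x, hA₁ x⟩ = x)
    (hA₃ : ∀ η (hη : η ∈ D.domain), A (Complex.I • η + D ⟨η, hη⟩) = η)
    (hB₀ : ∀ x, B x ∈ D.domain)
    (hB₁ : ∀ x, G (B x) ∈ D.domain)
    (hB₂ : ∀ x, Complex.I • B x + G (D ⟨G (B x), hB₁ x⟩) = x)
    (hB₃ : ∀ η (hη : G η ∈ D.domain), B (Complex.I • η + G (D ⟨G η, hη⟩)) = η)
    (haA : IsCompactOperator ⇑(a ∘L A)) :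
    IsCompactOperator ⇑(a ∘L G ∘L B) ∧ IsCompactOperator ⇑(a ∘L B) := by
  -- key identity: D⟨GBx⟩ = Ginv (x - I•Bx)
  have hDGB : ∀ x, (D ⟨G (B x), hB₁ x⟩ : H) = Ginv (x - Complex.I • B x) := by
    intro x
    have h := hB₂ x
    have : G (D ⟨G (B x), hB₁ x⟩) = x - Complex.I • B x := eq_sub_of_add_eq' h
    rw [← this, hGinv₂]
  -- C such that A ∘ C = G ∘ B
  set C : H →L[ℂ] H :=
    Complex.I • (G ∘L B) + Ginv ∘L (ContinuousLinearMap.id ℂ H - Complex.I • B) with hC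
  have hAC : ∀ x, A (C x) = G (B x) := by
    intro x
    have hCx : C x = Complex.I • G (B x) + (D ⟨G (B x), hB₁ x⟩ : H) := by
      simp [hC, hDGB x, map_sub]
    rw [hCx, hA₃ (G (B x)) (hB₁ x)]
  -- D⟨Bx⟩ in terms of bounded operators
  have hDB : ∀ x, (D ⟨B x, hB₀ x⟩ : H) =
      Ginv (Ginv (x - Complex.I • B x) - dG (B x)) := by
    intro x
    have h := hdG (B x) (hB₀ x)
    have heq : (D ⟨G (B x), hGdom (B x) (hB₀ x)⟩ : H) = D ⟨G (B x), hB₁ x⟩ := rfl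
    have : G (D ⟨B x, hB₀ x⟩) = Ginv (x - Complex.I • B x) - dG (B x) := by
      rw [h, heq, hDGB x, sub_sub_cancel]
    rw [← this, hGinv₂]
  set C' : H →L[ℂ] H :=
    Complex.I • B + Ginv ∘L (Ginv ∘L (ContinuousLinearMap.id ℂ H - Complex.I • B) - dG ∘L B)
    with hC'
  have hAC' : ∀ x, A (C' x) = B x := by
    intro x
    have hCx : C' x = Complex.I • B x + (D ⟨B x, hB₀ x⟩ : H) := by
      simp [hC', hDB x, map_sub]
    rw [hCx, hA₃ (B x) (hB₀ x)]
  constructor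
  · have h := haA.comp_clm C
    have : ⇑(a ∘L A) ∘ ⇑C = ⇑(a ∘L G ∘L B) := by
      funext x; simp [hAC x]
    rwa [this] at h
  · have h := haA.comp_clm C'
    have : ⇑(a ∘L A) ∘ ⇑C' = ⇑(a ∘L B) := by
      funext x; simp [hAC' x]
    rwa [this] at h
end

section
/- Let H be a complex Hilbert space, D₁ and D₂ densely defined self-adjoint operators on H, Δ and Γ nonnegative bounded operators on H, a a bounded operator on H, and c ≥ 0 a real number. Let S and T be self-adjoint bounded operators on H such that for all x ∈ H: S(x) ∈ dom D₁, D₁(S(x)) ∈ dom D₁ and c·Δ²(S(x)) + S(x) + D₁(D₁(S(x))) = x; and T(x) ∈ dom D₂, D₂(T(x)) ∈ dom D₂ and c·Γ²(T(x)) + T(x) + D₂(D₂(T(x))) = x. Let E and F be the bounded operators with E(x) = D₁(S(x)) and F(x) = D₂(T(x)) for all x. Let R₁, R₂, R₃ be bounded operators on H such that: (i) for all ξ ∈ dom D₁, Δξ ∈ dom D₁ and Δ^{1/2}(R₁(Δ^{1/2}ξ)) = D₁(Δξ) − Δ(D₁ξ); (ii) for all ξ ∈ dom D₂, Γξ ∈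 dom D₂ and Γ^{1/2}(R₂(Γ^{1/2}ξ)) = D₂(Γξ) − Γ(D₂ξ); (iii) for all ξ ∈ dom D₂, a(Γξ) ∈ dom D₁ and Δ^{1/2}(R₃(Γ^{1/2}ξ)) = D₁(a(Γξ)) − Δ(a(D₂ξ)). Then, as bounded operators on H: a∘Γ²∘T − S∘Δ²∘a = S∘(a∘Γ² − Δ²∘a)∘T + S∘(Δ^{1/2}∘R₁∘Δ^{1/2}∘a∘Γ + Δ∘Δ^{1/2}∘R₃∘Γ^{1/2})∘F + E*∘(Δ^{1/2}∘R₃∘Γ∘Γ^{1/2} + Δ∘a∘Γ^{1/2}∘R₂∘Γ^{1/2})∘T. -/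
open scoped ComplexConjugate

local notation "⟪" x ", " y "⟫" => @inner ℂ _ _ x y

/-- Symmetry of a self-adjoint `LinearPMap`. -/
lemma pmap_symm {H : Type*} [NormedAddCommGroup H] [InnerProductSpace ℂ H] [CompleteSpace H]
    (D : H →ₗ.[ℂ] H) (hd : Dense (D.domain : Set H)) (hsa : IsSelfAdjoint D) :
    ∀ u (hu : u ∈ D.domain) v (hv : v ∈ D.domain),
      ⟪D ⟨u, hu⟩, v⟫ = ⟪u, D ⟨v, hv⟩⟫ := by
  have key := LinearPMap.adjoint_isFormalAdjoint (T := D) hd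
  have heq : D.adjoint = D := hsa
  rw [heq] at key
  exact fun u hu v hv => key ⟨u, hu⟩ ⟨v, hv⟩

set_option maxHeartbeats 1000000 in
/-- The key algebraic identity comparing the modular resolvents
`S = (cΔ² + 1 + D₁²)⁻¹` and `T = (cΓ² + 1 + D₂²)⁻¹`:
`aΓ²T − SΔ²a = S(aΓ² − Δ²a)T + S(Δ^{1/2}R₁Δ^{1/2}aΓ + Δ^{3/2}R₃Γ^{1/2})F
  + E*(Δ^{1/2}R₃Γ^{3/2} + ΔaΓ^{1/2}R₂Γ^{1/2})T`. -/
theorem stmt_9 {H : Type*} [NormedAddCommGroup H] [InnerProductSpace ℂ H] [CompleteSpace H]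
    (D₁ D₂ : H →ₗ.[ℂ] H)
    (hdense₁ : Dense (D₁.domain : Set H)) (hdense₂ : Dense (D₂.domain : Set H))
    (hsa₁ : IsSelfAdjoint D₁) (hsa₂ : IsSelfAdjoint D₂)
    (Δ Γ a : H →L[ℂ] H) (hΔ : 0 ≤ Δ) (hΓ : 0 ≤ Γ)
    (c : ℝ) (hc : 0 ≤ c)
    (S T : H →L[ℂ] H) (hS : IsSelfAdjoint S) (hT : IsSelfAdjoint T)
    (hS₁ : ∀ x, S x ∈ D₁.domain)
    (hS₂ : ∀ x, D₁ ⟨S x, hS₁ x⟩ ∈ D₁.domain)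
    (hS₃ : ∀ x, c • Δ (Δ (S x)) + S x + D₁ ⟨D₁ ⟨S x, hS₁ x⟩, hS₂ x⟩ = x)
    (hT₁ : ∀ x, T x ∈ D₂.domain)
    (hT₂ : ∀ x, D₂ ⟨T x, hT₁ x⟩ ∈ D₂.domain)
    (hT₃ : ∀ x, c • Γ (Γ (T x)) + T x + D₂ ⟨D₂ ⟨T x, hT₁ x⟩, hT₂ x⟩ = x)
    (E F : H →L[ℂ] H)
    (hE : ∀ x, E x = D₁ ⟨S x, hS₁ x⟩)
    (hF : ∀ x, F x = D₂ ⟨T x, hT₁ x⟩)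
    (R₁ R₂ R₃ : H →L[ℂ] H)
    (hΔdom : ∀ ξ, ξ ∈ D₁.domain → Δ ξ ∈ D₁.domain)
    (hR₁ : ∀ ξ (hξ : ξ ∈ D₁.domain),
      CFC.sqrt Δ (R₁ (CFC.sqrt Δ ξ)) = D₁ ⟨Δ ξ, hΔdom ξ hξ⟩ - Δ (D₁ ⟨ξ, hξ⟩))
    (hΓdom : ∀ ξ, ξ ∈ D₂.domain → Γ ξ ∈ D₂.domain)
    (hR₂ : ∀ ξ (hξ : ξ ∈ D₂.domain),
      CFC.sqrt Γ (R₂ (CFC.sqrt Γ ξ)) = D₂ ⟨Γ ξ, hΓdom ξ hξ⟩ - Γ (D₂ ⟨ξ, hξ⟩))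
    (haΓ : ∀ ξ, ξ ∈ D₂.domain → a (Γ ξ) ∈ D₁.domain)
    (hR₃ : ∀ ξ (hξ : ξ ∈ D₂.domain),
      CFC.sqrt Δ (R₃ (CFC.sqrt Γ ξ)) = D₁ ⟨a (Γ ξ), haΓ ξ hξ⟩ - Δ (a (D₂ ⟨ξ, hξ⟩))) :
    a ∘L Γ ∘L Γ ∘L T - S ∘L Δ ∘L Δ ∘L a =
      S ∘L (a ∘L Γ ∘L Γ - Δ ∘L Δ ∘L a) ∘L T
        + S ∘L (CFC.sqrt Δ ∘L R₁ ∘L CFC.sqrt Δ ∘L a ∘L Γ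
            + Δ ∘L CFC.sqrt Δ ∘L R₃ ∘L CFC.sqrt Γ) ∘L F
        + (ContinuousLinearMap.adjoint E)
            ∘L (CFC.sqrt Δ ∘L R₃ ∘L Γ ∘L CFC.sqrt Γ
              + Δ ∘L a ∘L CFC.sqrt Γ ∘L R₂ ∘L CFC.sqrt Γ) ∘L T := by
  have hΔ' : IsSelfAdjoint Δ := IsSelfAdjoint.of_nonneg hΔ
  have sym₁ := pmap_symm D₁ hdense₁ hsa₁
  have sym₂ := pmap_symm D₂ hdense₂ hsa₂
  -- commutation of Γ with its square root
  have hcomm : ∀ v : H, CFC.sqrt Γ (Γ v) = Γ (CFC.sqrt Γ v) := by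
    have h1 : CFC.sqrt Γ * Γ = Γ * CFC.sqrt Γ := by
      calc CFC.sqrt Γ * Γ = CFC.sqrt Γ * (CFC.sqrt Γ * CFC.sqrt Γ) := by
            rw [CFC.sqrt_mul_sqrt_self Γ hΓ]
        _ = CFC.sqrt Γ * CFC.sqrt Γ * CFC.sqrt Γ := by rw [mul_assoc]
        _ = Γ * CFC.sqrt Γ := by rw [CFC.sqrt_mul_sqrt_self Γ hΓ]
    intro v
    have := congrArg (fun A : H →L[ℂ] H => A v) h1
    simpa [ContinuousLinearMap.mul_apply] using this
  ext x
  refine ext_inner_right ℂ fun y => ?_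
  -- memberships
  have hξ : T x ∈ D₂.domain := hT₁ x
  have hΓξ : Γ (T x) ∈ D₂.domain := hΓdom _ hξ
  have hη : F x ∈ D₂.domain := by rw [hF x]; exact hT₂ x
  have mζ : S y ∈ D₁.domain := hS₁ y
  have mθ : E y ∈ D₁.domain := by rw [hE y]; exact hS₂ y
  have m1 : a (Γ (Γ (T x))) ∈ D₁.domain := haΓ _ hΓξ
  have m2 : a (Γ (F x)) ∈ D₁.domain := haΓ _ hη
  have m3 : Δ (a (Γ (F x))) ∈ D₁.domain := hΔdom _ m2
  -- basic subtype rewrites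
  have eθ : D₁ ⟨S y, mζ⟩ = E y := (hE y).symm
  have eη : D₂ ⟨T x, hξ⟩ = F x := (hF x).symm
  have eηsub : (⟨F x, hη⟩ : D₂.domain) = ⟨D₂ ⟨T x, hξ⟩, hT₂ x⟩ := Subtype.ext (hF x)
  have eθsub : (⟨E y, mθ⟩ : D₁.domain) = ⟨D₁ ⟨S y, mζ⟩, hS₂ y⟩ := Subtype.ext (hE y)
  -- resolvent identities
  have V4 : y = c • Δ (Δ (S y)) + S y + D₁ ⟨E y, mθ⟩ := by
    rw [eθsub]; exact (hS₃ y).symm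
  have V5 : x = c • Γ (Γ (T x)) + T x + D₂ ⟨F x, hη⟩ := by
    rw [eηsub]; exact (hT₃ x).symm
  -- vector identities from the R's
  have V0 : D₂ ⟨Γ (T x), hΓξ⟩ = CFC.sqrt Γ (R₂ (CFC.sqrt Γ (T x))) + Γ (F x) := by
    have := hR₂ (T x) hξ
    rw [eη] at this
    rw [eq_sub_iff_add_eq] at this
    exact this.symm
  have V1 : D₁ ⟨a (Γ (Γ (T x))), m1⟩
      = CFC.sqrt Δ (R₃ (Γ (CFC.sqrt Γ (T x))))
        + Δ (a (CFC.sqrt Γ (R₂ (CFC.sqrt Γ (T x))))) + Δ (a (Γ (F x))) := by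
    have h := hR₃ (Γ (T x)) hΓξ
    rw [eq_sub_iff_add_eq] at h
    rw [← h, V0, hcomm]
    simp [map_add, add_assoc]
  have V2 : D₁ ⟨a (Γ (F x)), m2⟩
      = CFC.sqrt Δ (R₃ (CFC.sqrt Γ (F x))) + Δ (a (D₂ ⟨F x, hη⟩)) := by
    have h := hR₃ (F x) hη
    rw [eq_sub_iff_add_eq] at h
    exact h.symm
  have V3 : D₁ ⟨Δ (a (Γ (F x))), m3⟩
      = CFC.sqrt Δ (R₁ (CFC.sqrt Δ (a (Γ (F x))))) + Δ (D₁ ⟨a (Γ (F x)), m2⟩) := by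
    have h := hR₁ (a (Γ (F x))) m2
    rw [eq_sub_iff_add_eq] at h
    exact h.symm
  -- symmetry of bounded operators
  have hB1 : ∀ u : H, ⟪S u, y⟫ = ⟪u, S y⟫ := fun u => hS.isSymmetric u y
  have hB2 : ∀ u v : H, ⟪Δ u, v⟫ = ⟪u, Δ v⟫ := fun u v => hΔ'.isSymmetric u v
  have hsm : ∀ u v : H, ⟪u, c • v⟫ = (c : ℂ) * ⟪u, v⟫ := fun u v => by
    rw [← algebraMap_smul ℂ c v, Complex.coe_algebraMap, inner_smul_right]
  have hsm' : ∀ u v : H, ⟪c • u, v⟫ = (c : ℂ) * ⟪u, v⟫ := fun u v => by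
    rw [← algebraMap_smul ℂ c u, Complex.coe_algebraMap, inner_smul_left, Complex.conj_ofReal]
  -- Key scalar identity K1
  have K1 : ⟪a (Γ (Γ (T x))), y⟫
      = (c : ℂ) * ⟪a (Γ (Γ (T x))), Δ (Δ (S y))⟫ + ⟪a (Γ (Γ (T x))), S y⟫
        + ⟪CFC.sqrt Δ (R₃ (Γ (CFC.sqrt Γ (T x)))), E y⟫
        + ⟪a (CFC.sqrt Γ (R₂ (CFC.sqrt Γ (T x)))), Δ (E y)⟫
        + ⟪a (Γ (F x)), Δ (E y)⟫ := by
    conv_lhs => rw [V4]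
    rw [inner_add_right, inner_add_right, hsm, ← sym₁ _ m1 _ mθ, V1,
      inner_add_left, inner_add_left, hB2, hB2]
    ring
  -- Key scalar identity K2
  have K2 : ⟪a (Γ (F x)), Δ (E y)⟫
      = ⟪CFC.sqrt Δ (R₁ (CFC.sqrt Δ (a (Γ (F x))))), S y⟫
        + ⟪CFC.sqrt Δ (R₃ (CFC.sqrt Γ (F x))), Δ (S y)⟫
        + ⟪a (D₂ ⟨F x, hη⟩), Δ (Δ (S y))⟫ := by
    rw [← hB2, ← eθ, ← sym₁ _ m3 _ mζ, V3, inner_add_left, hB2, V2,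
      inner_add_left, hB2]
    ring
  -- Key scalar identity K3
  have K3 : ⟪a x, Δ (Δ (S y))⟫
      = (c : ℂ) * ⟪a (Γ (Γ (T x))), Δ (Δ (S y))⟫ + ⟪a (T x), Δ (Δ (S y))⟫
        + ⟪a (D₂ ⟨F x, hη⟩), Δ (Δ (S y))⟫ := by
    conv_lhs => rw [V5]
    rw [map_add, map_add, ContinuousLinearMap.map_smul_of_tower, inner_add_left, inner_add_left, hsm']
  -- finish
  simp only [ContinuousLinearMap.comp_apply, ContinuousLinearMap.sub_apply,
    ContinuousLinearMap.add_apply, ContinuousLinearMap.adjoint_inner_left,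
    inner_sub_left, inner_add_left, hB1, hB2, inner_sub_right, inner_add_right]
  linear_combination K1 + K2 - K3
end
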